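/- For k ≥ 2, the function a ↦ J(a,k) = ∫_{-π/2}^{π/2} e^{2at} cos^{2k-2} t dt extends holomorphically to the strip {z ∈ ℂ : |Im z| < k} and has no zeros there. -/

import Mathlib

open MeasureTheory Real

/-- The holomorphic extension `J(z,k) = ∫_{-π/2}^{π/2} e^{2zt} cos^{2k-2} t dt`. -/
noncomputable def Jc (k : ℕ) (z : ℂ) : ℂ :=
  ∫ t in (-(π / 2))..(π / 2), Complex.exp (2 * z * t) * (Real.cos t : ℂ) ^ (2 * k - 2)


noncomputable def In (n : ℕ) (z : ℂ) : ℂ :=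
  ∫ t in (-(π / 2))..(π / 2), Complex.exp (2 * z * t) * (Real.cos t : ℂ) ^ (2 * n)

-- test cos def
example (z : ℂ) : Complex.cos z = (Complex.exp (z * Complex.I) + Complex.exp (-z * Complex.I)) / 2 := rfl

-- derivative in z
lemma hasDerivAt_aux (m : ℕ) (t : ℝ) (z : ℂ) :
    HasDerivAt (fun z : ℂ => Complex.exp (2 * z * t) * (Real.cos t : ℂ) ^ m)
      ((2 * t) * Complex.exp (2 * z * t) * (Real.cos t : ℂ) ^ m) z := by
  have h1 : HasDerivAt (fun z : ℂ => 2 * z * (t : ℂ)) (2 * t) z := by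
    simpa using ((hasDerivAt_id z).const_mul (2 : ℂ)).mul_const (t : ℂ)
  simpa [mul_comm] using (h1.cexp).mul_const ((Real.cos t : ℂ) ^ m)

lemma cont_aux (m : ℕ) (z : ℂ) :
    Continuous (fun t : ℝ => Complex.exp (2 * z * t) * (Real.cos t : ℂ) ^ m) := by
  exact (Complex.continuous_exp.comp (by continuity)).mul
    ((Complex.continuous_ofReal.comp Real.continuous_cos).pow m)

lemma bound_aux (m : ℕ) (z₀ : ℂ) (t : ℝ) (ht : t ∈ Set.uIoc (-(π/2)) (π/2))
    (z : ℂ) (hz : z ∈ Metric.ball z₀ 1) :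
    ‖(2 * (t:ℂ)) * Complex.exp (2 * z * t) * (Real.cos t : ℂ) ^ m‖ ≤
      π * Real.exp (π * (|z₀.re| + 1)) := by
  have ht' : |t| ≤ π / 2 := by
    rw [Set.uIoc_of_le (by linarith [Real.pi_pos] : -(π/2) ≤ π/2)] at ht
    rw [abs_le]; constructor <;> [linarith [ht.1]; linarith [ht.2]]
  have hre : |z.re| ≤ |z₀.re| + 1 := by
    have h1 : |z.re - z₀.re| ≤ ‖z - z₀‖ := by
      simpa using Complex.abs_re_le_norm (z - z₀)
    have h2 : ‖z - z₀‖ ≤ 1 := by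
      rw [Metric.mem_ball] at hz
      simpa [Complex.dist_eq] using hz.le
    have := abs_sub_abs_le_abs_sub z.re z₀.re
    linarith [h1.trans h2]
  have hπ : (0:ℝ) < π := Real.pi_pos
  rw [norm_mul, norm_mul]
  have hcos : ‖(Real.cos t : ℂ) ^ m‖ ≤ 1 := by
    rw [norm_pow]
    apply pow_le_one₀ (norm_nonneg _)
    rw [Complex.norm_real, Real.norm_eq_abs]
    exact Real.abs_cos_le_one t
  have hexp : ‖Complex.exp (2 * z * t)‖ ≤ Real.exp (π * (|z₀.re| + 1)) := by
    rw [Complex.norm_exp]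
    apply Real.exp_le_exp.2
    have : (2 * z * (t:ℂ)).re = 2 * z.re * t := by simp [Complex.mul_re]
    rw [this]
    calc 2 * z.re * t ≤ |2 * z.re * t| := le_abs_self _
      _ = 2 * |z.re| * |t| := by rw [abs_mul, abs_mul]; simp
      _ ≤ 2 * (|z₀.re| + 1) * (π/2) := by
          apply mul_le_mul (by nlinarith [abs_nonneg z.re]) ht' (abs_nonneg t)
          positivity
      _ = π * (|z₀.re| + 1) := by ring
  have h2t : ‖(2 * (t:ℂ))‖ ≤ π := by
    rw [show ((2:ℂ) * t) = ((2*t : ℝ) : ℂ) by push_cast; ring]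
    rw [Complex.norm_real, Real.norm_eq_abs, abs_mul]
    calc |(2:ℝ)| * |t| = 2 * |t| := by norm_num
      _ ≤ 2 * (π/2) := by linarith
      _ = π := by ring
  calc ‖(2 * (t:ℂ))‖ * ‖Complex.exp (2 * z * t)‖ * ‖(Real.cos t : ℂ) ^ m‖
      ≤ π * Real.exp (π * (|z₀.re| + 1)) * 1 := by
        apply mul_le_mul _ hcos (norm_nonneg _) (by positivity)
        exact mul_le_mul h2t hexp (norm_nonneg _) hπ.le
    _ = π * Real.exp (π * (|z₀.re| + 1)) := by ring

set_option maxHeartbeats 1000000 in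
lemma In_differentiable (m : ℕ) :
    Differentiable ℂ (fun z : ℂ =>
      ∫ t in (-(π / 2))..(π / 2), Complex.exp (2 * z * t) * (Real.cos t : ℂ) ^ m) := by
  intro z₀
  have hmeas : ∀ᶠ z in nhds z₀, AEStronglyMeasurable
      (fun t : ℝ => Complex.exp (2 * z * t) * (Real.cos t : ℂ) ^ m)
      (volume.restrict (Set.uIoc (-(π/2)) (π/2))) :=
    Filter.Eventually.of_forall fun z => ((cont_aux m z).aestronglyMeasurable).restrict
  have hint : IntervalIntegrable
      (fun t : ℝ => Complex.exp (2 * z₀ * t) * (Real.cos t : ℂ) ^ m) volume (-(π/2)) (π/2) :=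
    (cont_aux m z₀).intervalIntegrable _ _
  have hcont' : Continuous (fun t : ℝ => (2 * (t:ℂ)) * Complex.exp (2 * z₀ * t) * (Real.cos t : ℂ) ^ m) :=
    ((continuous_const.mul Complex.continuous_ofReal).mul
      (Complex.continuous_exp.comp (by continuity))).mul
      ((Complex.continuous_ofReal.comp Real.continuous_cos).pow m)
  have hmeas' : AEStronglyMeasurable
      (fun t : ℝ => (2 * (t:ℂ)) * Complex.exp (2 * z₀ * t) * (Real.cos t : ℂ) ^ m)
      (volume.restrict (Set.uIoc (-(π/2)) (π/2))) :=
    (hcont'.aestronglyMeasurable).restrict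
  have hbound : ∀ᵐ t ∂(volume : Measure ℝ), t ∈ Set.uIoc (-(π/2)) (π/2) →
      ∀ z ∈ Metric.ball z₀ 1,
      ‖(2 * (t:ℂ)) * Complex.exp (2 * z * t) * (Real.cos t : ℂ) ^ m‖ ≤
        π * Real.exp (π * (|z₀.re| + 1)) :=
    Filter.Eventually.of_forall fun t ht z hz => bound_aux m z₀ t ht z hz
  have hbi : IntervalIntegrable (fun _ : ℝ => π * Real.exp (π * (|z₀.re| + 1)))
      volume (-(π/2)) (π/2) := intervalIntegrable_const
  have hdiff : ∀ᵐ t ∂(volume : Measure ℝ), t ∈ Set.uIoc (-(π/2)) (π/2) →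
      ∀ z ∈ Metric.ball z₀ 1, HasDerivAt
        (fun z => Complex.exp (2 * z * t) * (Real.cos t : ℂ) ^ m)
        ((2 * (t:ℂ)) * Complex.exp (2 * z * t) * (Real.cos t : ℂ) ^ m) z :=
    Filter.Eventually.of_forall fun t _ z _ => hasDerivAt_aux m t z
  have key := intervalIntegral.hasDerivAt_integral_of_dominated_loc_of_deriv_le
    (F := fun (z : ℂ) (t : ℝ) => Complex.exp (2 * z * t) * (Real.cos t : ℂ) ^ m)
    (F' := fun (z : ℂ) (t : ℝ) => (2 * (t:ℂ)) * Complex.exp (2 * z * t) * (Real.cos t : ℂ) ^ m)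
    (bound := fun _ : ℝ => π * Real.exp (π * (|z₀.re| + 1)))
    (Metric.ball_mem_nhds z₀ one_pos) hmeas hint hmeas' hbound hbi hdiff
  exact key.2.differentiableAt

noncomputable def Aa (n : ℕ) (z : ℂ) : ℂ :=
  ∫ t in (-(π / 2))..(π / 2),
    Complex.exp (2 * z * t) * (Real.cos t : ℂ) ^ (2 * n + 1) * (Real.sin t : ℂ)

lemma hasDerivAt_exp_t (z : ℂ) (t : ℝ) :
    HasDerivAt (fun t : ℝ => Complex.exp (2 * z * t)) (2 * z * Complex.exp (2 * z * t)) t := by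
  have h : HasDerivAt (fun w : ℂ => Complex.exp (2 * z * w))
      (2 * z * Complex.exp (2 * z * (t : ℂ))) (t : ℂ) := by
    simpa [mul_comm] using ((hasDerivAt_id (t : ℂ)).const_mul (2 * z)).cexp
  exact h.comp_ofReal

lemma contES (z : ℂ) (a : ℕ) :
    Continuous (fun t : ℝ =>
      Complex.exp (2 * z * t) * (Real.cos t : ℂ) ^ a * (Real.sin t : ℂ)) :=
  (cont_aux a z).mul (Complex.continuous_ofReal.comp Real.continuous_sin)

lemma key1 (n : ℕ) (z : ℂ) : 2 * z * In (n + 1) z = (2 * n + 2 : ℂ) * Aa n z := by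
  have hderiv : ∀ t ∈ Set.uIcc (-(π/2)) (π/2),
      HasDerivAt (fun t : ℝ => Complex.exp (2*z*t) * ((Real.cos t : ℂ))^(2*n+2))
        (2*z*(Complex.exp (2*z*t) * (Real.cos t:ℂ)^(2*n+2))
          - (2*n+2 : ℂ) * (Complex.exp (2*z*t) * (Real.cos t:ℂ)^(2*n+1) * (Real.sin t:ℂ))) t := by
    intro t _
    have h := (hasDerivAt_exp_t z t).mul
      (((Real.hasDerivAt_cos t).pow (2*n+2)).ofReal_comp)
    have e : 2*n+2-1 = 2*n+1 := by omega
    rw [e] at h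
    refine HasDerivAt.congr_deriv (h.congr_of_eventuallyEq ?_) ?_
    · filter_upwards with x; simp only [Pi.mul_apply, Pi.pow_apply]; push_cast; ring
    · simp only [Pi.pow_apply]; push_cast; ring
  have hint : IntervalIntegrable (fun t : ℝ =>
      2*z*(Complex.exp (2*z*t) * (Real.cos t:ℂ)^(2*n+2))
        - (2*n+2 : ℂ) * (Complex.exp (2*z*t) * (Real.cos t:ℂ)^(2*n+1) * (Real.sin t:ℂ)))
      volume (-(π/2)) (π/2) :=
    ((continuous_const.mul (cont_aux (2*n+2) z)).sub (continuous_const.mul (contES z (2*n+1)))).intervalIntegrable _ _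
  have h0 := intervalIntegral.integral_eq_sub_of_hasDerivAt hderiv hint
  rw [Real.cos_pi_div_two, Real.cos_neg, Real.cos_pi_div_two] at h0
  simp only [Complex.ofReal_zero, zero_pow (by omega : 2*n+2 ≠ 0), mul_zero, sub_zero] at h0
  rw [intervalIntegral.integral_sub (f := fun t : ℝ => 2*z*(Complex.exp (2*z*t) * (Real.cos t:ℂ)^(2*n+2)))
      (g := fun t : ℝ => (2*n+2 : ℂ) * (Complex.exp (2*z*t) * (Real.cos t:ℂ)^(2*n+1) * (Real.sin t:ℂ)))
      ((continuous_const.mul (cont_aux (2*n+2) z)).intervalIntegrable _ _)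
      ((continuous_const.mul (contES z (2*n+1))).intervalIntegrable _ _),
    intervalIntegral.integral_const_mul, intervalIntegral.integral_const_mul] at h0
  simp only [In, Aa, show 2*(n+1) = 2*n+2 by ring]
  linear_combination h0

lemma key2 (n : ℕ) (z : ℂ) :
    2 * z * Aa n z + (2 * n + 2 : ℂ) * In (n + 1) z = (2 * n + 1 : ℂ) * In n z := by
  have hderiv : ∀ t ∈ Set.uIcc (-(π/2)) (π/2),
      HasDerivAt (fun t : ℝ =>
          Complex.exp (2*z*t) * (Real.cos t:ℂ)^(2*n+1) * (Real.sin t:ℂ))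
        (2*z*(Complex.exp (2*z*t) * (Real.cos t:ℂ)^(2*n+1) * (Real.sin t:ℂ))
          + (2*n+2 : ℂ) * (Complex.exp (2*z*t) * (Real.cos t:ℂ)^(2*n+2))
          - (2*n+1 : ℂ) * (Complex.exp (2*z*t) * (Real.cos t:ℂ)^(2*n))) t := by
    intro t _
    have hu : HasDerivAt (fun t : ℝ => Real.cos t ^ (2*n+1) * Real.sin t)
        ((2*n+1 : ℝ) * Real.cos t ^ (2*n) * (-Real.sin t) * Real.sin t
          + Real.cos t ^ (2*n+1) * Real.cos t) t := by
      have h1 := ((Real.hasDerivAt_cos t).pow (2*n+1)).mul (Real.hasDerivAt_sin t)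
      have e : 2*n+1-1 = 2*n := by omega
      rw [e] at h1
      exact_mod_cast h1
    have h := (hasDerivAt_exp_t z t).mul hu.ofReal_comp
    have hs : (Real.sin t : ℂ)^2 = 1 - (Real.cos t : ℂ)^2 := by
      have hr : Real.sin t ^ 2 = 1 - Real.cos t ^ 2 := by
        nlinarith [Real.sin_sq_add_cos_sq t]
      calc (Real.sin t:ℂ)^2 = ((Real.sin t^2 : ℝ) : ℂ) := by push_cast; ring
        _ = ((1 - Real.cos t^2 : ℝ):ℂ) := by rw [hr]
        _ = 1 - (Real.cos t:ℂ)^2 := by push_cast; ring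
    refine HasDerivAt.congr_deriv (h.congr_of_eventuallyEq ?_) ?_
    · filter_upwards with x; simp only [Pi.mul_apply]; push_cast; ring
    · push_cast
      push_cast at hs
      linear_combination (-(2*(n:ℂ)+1) * Complex.exp (2*z*(t:ℂ)) * (Complex.cos (t:ℂ))^(2*n)) * hs
  have hi1 : IntervalIntegrable (fun t : ℝ =>
      2*z*(Complex.exp (2*z*t) * (Real.cos t:ℂ)^(2*n+1) * (Real.sin t:ℂ)))
      volume (-(π/2)) (π/2) := (continuous_const.mul (contES z (2*n+1))).intervalIntegrable _ _
  have hi2 : IntervalIntegrable (fun t : ℝ =>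
      (2*n+2 : ℂ) * (Complex.exp (2*z*t) * (Real.cos t:ℂ)^(2*n+2)))
      volume (-(π/2)) (π/2) := (continuous_const.mul (cont_aux (2*n+2) z)).intervalIntegrable _ _
  have hi3 : IntervalIntegrable (fun t : ℝ =>
      (2*n+1 : ℂ) * (Complex.exp (2*z*t) * (Real.cos t:ℂ)^(2*n)))
      volume (-(π/2)) (π/2) := (continuous_const.mul (cont_aux (2*n) z)).intervalIntegrable _ _
  have hint : IntervalIntegrable (fun t : ℝ =>
      2*z*(Complex.exp (2*z*t) * (Real.cos t:ℂ)^(2*n+1) * (Real.sin t:ℂ))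
        + (2*n+2 : ℂ) * (Complex.exp (2*z*t) * (Real.cos t:ℂ)^(2*n+2))
        - (2*n+1 : ℂ) * (Complex.exp (2*z*t) * (Real.cos t:ℂ)^(2*n)))
      volume (-(π/2)) (π/2) := (hi1.add hi2).sub hi3
  have h0 := intervalIntegral.integral_eq_sub_of_hasDerivAt hderiv hint
  rw [Real.cos_pi_div_two, Real.cos_neg, Real.cos_pi_div_two] at h0
  simp only [Complex.ofReal_zero, zero_pow (by omega : 2*n+1 ≠ 0), mul_zero, zero_mul,
    sub_zero] at h0
  rw [intervalIntegral.integral_sub (hi1.add hi2) hi3,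
    intervalIntegral.integral_add hi1 hi2,
    intervalIntegral.integral_const_mul, intervalIntegral.integral_const_mul,
    intervalIntegral.integral_const_mul] at h0
  simp only [In, Aa, show 2*(n+1) = 2*n+2 by ring]
  push_cast
  push_cast at h0
  linear_combination h0

lemma rec_In (n : ℕ) (z : ℂ) :
    2 * (z^2 + ((n:ℂ)+1)^2) * In (n+1) z = (((n:ℂ)+1) * (2*n+1)) * In n z := by
  have h1 := key1 n z
  have h2 := key2 n z
  linear_combination z * h1 + ((n:ℂ)+1) * h2

lemma chain_In (n : ℕ) (z : ℂ) :
    (∏ j ∈ Finset.range n, (2 * (z^2 + ((j:ℂ)+1)^2))) * In n z =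
      (∏ j ∈ Finset.range n, (((j:ℂ)+1) * (2*j+1))) * In 0 z := by
  induction n with
  | zero => simp
  | succ n ih =>
    rw [Finset.prod_range_succ, Finset.prod_range_succ]
    calc (∏ j ∈ Finset.range n, (2 * (z^2 + ((j:ℂ)+1)^2))) * (2 * (z^2 + ((n:ℂ)+1)^2)) * In (n+1) z
        = (∏ j ∈ Finset.range n, (2 * (z^2 + ((j:ℂ)+1)^2))) * (2 * (z^2 + ((n:ℂ)+1)^2) * In (n+1) z) := by ring
      _ = (∏ j ∈ Finset.range n, (2 * (z^2 + ((j:ℂ)+1)^2))) * ((((n:ℂ)+1) * (2*n+1)) * In n z) := by rw [rec_In]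
      _ = ((∏ j ∈ Finset.range n, (2 * (z^2 + ((j:ℂ)+1)^2))) * In n z) * (((n:ℂ)+1) * (2*n+1)) := by ring
      _ = ((∏ j ∈ Finset.range n, (((j:ℂ)+1) * (2*j+1))) * In 0 z) * (((n:ℂ)+1) * (2*n+1)) := by rw [ih]
      _ = (∏ j ∈ Finset.range n, (((j:ℂ)+1) * (2*j+1))) * (((n:ℂ)+1) * (2*n+1)) * In 0 z := by ring

lemma In_zero_ne (z : ℂ) (h : ∀ m : ℤ, z ≠ (m : ℂ) * Complex.I) : In 0 z ≠ 0 := by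
  have hz : z ≠ 0 := by
    intro h0
    exact h 0 (by simp [h0])
  have hval : In 0 z = (Complex.exp (2*z*(π/2)) - Complex.exp (2*z*(-(π/2)))) / (2*z) := by
    simp only [In, mul_zero, pow_zero, mul_one]
    rw [show (fun t : ℝ => Complex.exp (2*z*t)) = fun t : ℝ => Complex.exp ((2*z)*t) by rfl]
    rw [integral_exp_mul_complex (by simpa using hz)]
    push_cast
    ring_nf
  rw [hval]
  intro hcontra
  rw [div_eq_zero_iff] at hcontra
  rcases hcontra with hc | hc
  · rw [sub_eq_zero] at hc
    have : Complex.exp (2*z*(π/2) - 2*z*(-(π/2))) = 1 := by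
      rw [Complex.exp_sub, hc, div_self (Complex.exp_ne_zero _)]
    rw [show 2*z*((π:ℂ)/2) - 2*z*(-(π/2)) = 2*(π:ℂ)*z by ring] at this
    rw [Complex.exp_eq_one_iff] at this
    obtain ⟨m, hm⟩ := this
    apply h m
    have hπ : (π : ℂ) ≠ 0 := Complex.ofReal_ne_zero.mpr Real.pi_ne_zero
    have h2π : (2*(π:ℂ)) ≠ 0 := by
      simp [hπ]
    apply mul_left_cancel₀ h2π
    rw [hm]
    ring
  · exact hz (by simpa using hc)

lemma neg_one_zpow_neg (d : ℤ) : ((-1:ℂ))^(-d) = (-1)^d := by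
  have h2 : ((-1:ℂ))^(2*d) = 1 := by
    rw [zpow_mul]; norm_num
  calc ((-1:ℂ))^(-d) = (-1)^(-d) * (-1)^(2*d) := by rw [h2, mul_one]
    _ = (-1)^(-d + 2*d) := (zpow_add₀ (by norm_num) _ _).symm
    _ = (-1)^d := by rw [show -d + 2*d = d by ring]

lemma exp_int_pi (e : ℤ) : Complex.exp ((e:ℂ) * ((π:ℂ) * Complex.I)) = (-1:ℂ)^e := by
  rw [Complex.exp_int_mul, Complex.exp_pi_mul_I]

lemma term_int (d : ℤ) (hd : d ≠ 0) :
    ∫ t in (-(π/2))..(π/2), Complex.exp ((2*(d:ℂ)*Complex.I) * t) = 0 := by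
  have hc : (2*(d:ℂ)*Complex.I) ≠ 0 := by
    simp [Complex.I_ne_zero, hd]
  rw [integral_exp_mul_complex hc]
  have hnum : Complex.exp (2*(d:ℂ)*Complex.I * (π/2 : ℝ)) =
      Complex.exp (2*(d:ℂ)*Complex.I * ((-(π/2) : ℝ))) := by
    rw [show (2*(d:ℂ)*Complex.I * (π/2 : ℝ)) = (d:ℂ) * ((π:ℂ)*Complex.I) by push_cast; ring,
      show (2*(d:ℂ)*Complex.I * ((-(π/2) : ℝ))) = (((-d : ℤ)):ℂ) * ((π:ℂ)*Complex.I) by push_cast; ring]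
    rw [exp_int_pi, exp_int_pi, neg_one_zpow_neg]
  rw [hnum, sub_self, zero_div]

lemma term_int0 : (∫ t in (-(π/2))..(π/2), (1:ℂ)) = (π:ℂ) := by
  rw [intervalIntegral.integral_const]
  norm_num

lemma expand_pt (n : ℕ) (m : ℤ) (t : ℝ) :
    Complex.exp (2*((m:ℂ)*Complex.I)*t) * (Real.cos t:ℂ)^(2*n)
      = ∑ j ∈ Finset.range (2*n+1),
          ((Nat.choose (2*n) j : ℂ) / 4^n) *
            Complex.exp ((2*(((m + j - n : ℤ)):ℂ)*Complex.I) * t) := by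
  have hcos : (Real.cos t : ℂ) =
      (Complex.exp ((t:ℂ)*Complex.I) + Complex.exp (-(t:ℂ)*Complex.I)) / 2 := by
    rw [Complex.ofReal_cos]
    rfl
  rw [hcos, div_pow, add_pow]
  rw [show (2:ℂ)^(2*n) = 4^n by rw [pow_mul]; norm_num]
  rw [← mul_div_assoc, Finset.mul_sum, Finset.sum_div]
  apply Finset.sum_congr rfl
  intro j hj
  rw [Finset.mem_range] at hj
  have hj' : j ≤ 2*n := by omega
  rw [← Complex.exp_nat_mul, ← Complex.exp_nat_mul]
  rw [show Complex.exp (2*((m:ℂ)*Complex.I)*(t:ℂ)) *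
      (Complex.exp ((j:ℂ) * ((t:ℂ)*Complex.I)) * Complex.exp (((2*n-j : ℕ):ℂ) * (-(t:ℂ)*Complex.I)) * ((Nat.choose (2*n) j : ℂ))) / 4^n
      = ((Nat.choose (2*n) j : ℂ) / 4^n) *
        (Complex.exp (2*((m:ℂ)*Complex.I)*(t:ℂ)) * Complex.exp ((j:ℂ) * ((t:ℂ)*Complex.I)) * Complex.exp (((2*n-j : ℕ):ℂ) * (-(t:ℂ)*Complex.I))) by ring]
  rw [← Complex.exp_add, ← Complex.exp_add]
  congr 1
  have hcast : ((2*n-j : ℕ):ℂ) = 2*(n:ℂ) - (j:ℂ) := by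
    push_cast [Nat.cast_sub hj']
    ring
  rw [hcast]
  push_cast
  ring

lemma In_imaginary_ne (n : ℕ) (m : ℤ) (hm : |m| ≤ (n:ℤ)) :
    In n ((m:ℂ) * Complex.I) ≠ 0 := by
  have hm1 : -(n:ℤ) ≤ m := (abs_le.mp hm).1
  have hm2 : m ≤ (n:ℤ) := (abs_le.mp hm).2
  set j₀ : ℕ := (n - m).toNat with hj₀def
  have hj₀ : (j₀ : ℤ) = (n:ℤ) - m := Int.toNat_of_nonneg (by omega)
  have hj₀mem : j₀ ∈ Finset.range (2*n+1) := by
    rw [Finset.mem_range]; omega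
  have hcont : ∀ j : ℕ, IntervalIntegrable
      (fun t : ℝ => ((Nat.choose (2*n) j : ℂ) / 4^n) *
        Complex.exp ((2*(((m + j - n : ℤ)):ℂ)*Complex.I) * t)) volume (-(π/2)) (π/2) := by
    intro j
    apply Continuous.intervalIntegrable
    exact continuous_const.mul (Complex.continuous_exp.comp (by continuity))
  have hval : In n ((m:ℂ) * Complex.I) =
      ∑ j ∈ Finset.range (2*n+1), ((Nat.choose (2*n) j : ℂ) / 4^n) *
        ∫ t in (-(π/2))..(π/2), Complex.exp ((2*(((m + j - n : ℤ)):ℂ)*Complex.I) * t) := by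
    rw [In]
    rw [intervalIntegral.integral_congr (g := fun t : ℝ => ∑ j ∈ Finset.range (2*n+1),
      ((Nat.choose (2*n) j : ℂ) / 4^n) * Complex.exp ((2*(((m + j - n : ℤ)):ℂ)*Complex.I) * t))
      (fun t _ => expand_pt n m t)]
    rw [intervalIntegral.integral_finset_sum (fun j _ => hcont j)]
    exact Finset.sum_congr rfl (fun j _ => intervalIntegral.integral_const_mul _ _)
  rw [hval]
  rw [Finset.sum_eq_single_of_mem j₀ hj₀mem ?side]
  · have hd0 : (m + (j₀:ℤ) - (n:ℤ)) = 0 := by omega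
    rw [hd0]
    have : (fun t : ℝ => Complex.exp ((2*((0:ℤ):ℂ)*Complex.I) * t)) = fun _ : ℝ => (1:ℂ) := by
      funext t; norm_num
    rw [show ∫ t in (-(π/2))..(π/2), Complex.exp ((2*((0:ℤ):ℂ)*Complex.I) * t)
        = ∫ t in (-(π/2))..(π/2), (1:ℂ) from by rw [this]]
    rw [term_int0]
    apply mul_ne_zero
    · apply div_ne_zero
      · exact_mod_cast Nat.cast_ne_zero.mpr (Nat.choose_pos (by omega : j₀ ≤ 2*n)).ne'
      · norm_num
    · exact_mod_cast Complex.ofReal_ne_zero.mpr Real.pi_ne_zero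
  · intro j hjmem hne
    rw [Finset.mem_range] at hjmem
    have hd : (m + (j:ℤ) - (n:ℤ)) ≠ 0 := by
      intro h0
      apply hne
      omega
    rw [term_int _ hd, mul_zero]

lemma Jc_eq_In (k : ℕ) : Jc k = In (k - 1) := by
  funext z
  rw [Jc, In, show 2 * (k-1) = 2*k - 2 by omega]

/-- For `k ≥ 2`, `a ↦ J(a,k) = ∫_{-π/2}^{π/2} e^{2at} cos^{2k-2} t dt` extends
holomorphically to the strip `{|Im z| < k}` (via the same formula) and has no
zeros there. -/
theorem stmt_7 (k : ℕ) (hk : 2 ≤ k) :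
    DifferentiableOn ℂ (Jc k) {z : ℂ | |z.im| < k} ∧
      (∀ z : ℂ, |z.im| < k → Jc k z ≠ 0) ∧
      ∀ a : ℝ, Jc k (a : ℂ) =
        ((∫ t in (-(π / 2))..(π / 2), Real.exp (2 * a * t) * Real.cos t ^ (2 * k - 2) : ℝ) : ℂ) := by
  have hkN : (k : ℝ) = ((k - 1 : ℕ) : ℝ) + 1 := by
    have : k - 1 + 1 = k := by omega
    rw [← this]; push_cast; ring
  refine ⟨?_, ?_, ?_⟩
  · rw [Jc_eq_In]
    exact (In_differentiable (2 * (k-1))).differentiableOn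
  · intro z hz
    rw [Jc_eq_In]
    set N := k - 1 with hN

    by_cases hcase : ∃ m : ℤ, z = (m:ℂ) * Complex.I
    · obtain ⟨m, rfl⟩ := hcase
      apply In_imaginary_ne N m
      have him : (((m:ℂ) * Complex.I).im) = (m:ℝ) := by simp
      rw [him, hkN] at hz
      have : |(m:ℝ)| < ((N:ℝ)) + 1 := hz
      have h2 : ((|m| : ℤ) : ℝ) < (((N:ℤ) + 1 : ℤ) : ℝ) := by push_cast [Int.cast_abs] at this ⊢; exact this
      have h3 : |m| < (N:ℤ) + 1 := by exact_mod_cast h2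
      omega
    · have hzero : In 0 z ≠ 0 := In_zero_ne z (fun m hm => hcase ⟨m, hm⟩)
      have hPz : (∏ j ∈ Finset.range N, (2 * (z^2 + ((j:ℂ)+1)^2))) ≠ 0 := by
        rw [Finset.prod_ne_zero_iff]
        intro j _
        intro h0
        have h0' : (z - ((j:ℂ)+1)*Complex.I) * (z + ((j:ℂ)+1)*Complex.I) = 0 := by
          have hI : Complex.I^2 = -1 := Complex.I_sq
          linear_combination h0 / 2 - (((j:ℂ)+1)^2) * hI
        rcases mul_eq_zero.mp h0' with h1 | h1
        · exact hcase ⟨(j:ℤ)+1, by push_cast; linear_combination h1⟩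
        · exact hcase ⟨-((j:ℤ)+1), by push_cast; linear_combination h1⟩
      have hCz : (∏ j ∈ Finset.range N, (((j:ℂ)+1) * (2*j+1))) ≠ 0 := by
        rw [Finset.prod_ne_zero_iff]
        intro j _
        apply mul_ne_zero
        · have : (((j+1 : ℕ)):ℂ) ≠ 0 := Nat.cast_ne_zero.mpr (by omega)
          push_cast at this; exact this
        · have : (((2*j+1 : ℕ)):ℂ) ≠ 0 := Nat.cast_ne_zero.mpr (by omega)
          push_cast at this; exact this
      intro h0
      have := chain_In N z
      rw [h0, mul_zero] at this
      exact hzero (by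
        rcases mul_eq_zero.mp this.symm with h | h
        · exact absurd h hCz
        · exact h)
  · intro a
    rw [Jc, ← intervalIntegral.integral_ofReal]
    apply intervalIntegral.integral_congr
    intro t _
    push_cast
    ring
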